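/- arXiv:2504.01729 — 2 statements merged into one kernel-verified Lean document; each statement's English description precedes it below -/
import Mathlib

section
/- There is a constant C > 0 with the following property. Let u : ℝ² → ℝ² be a C^∞, compactly supported, divergence-free vector field, let ω := ∂₁u² − ∂₂u¹, and define Q(l) := ⨍_{𝕊} ∫_{ℝ²} ( u²(x) ω(x+ln) + u²(x+ln) ω(x) ) dx dn for l ≥ 0. Then |Q(l)| ≤ C l ∫_{ℝ²} |∇u(x)|² dx for every l ≥ 0. -/
/-!
STATEMENT 6: There is `C > 0` such that for every C^∞ compactly supported
divergence-free `u : ℝ² → ℝ²` with vorticity `ω := ∂₁u² − ∂₂u¹`, the function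
`Q(l) := ⨍_𝕊 ∫ ( u²(x) ω(x+ln) + u²(x+ln) ω(x) ) dx dn`
satisfies `|Q(l)| ≤ C l ∫ |∇u|²` for all `l ≥ 0`.
-/

open MeasureTheory

noncomputable section

/-- The plane `ℝ²`. -/
abbrev E2 : Type := EuclideanSpace ℝ (Fin 2)

/-- Partial derivative `∂ᵢ f` of a scalar function on `ℝ²`. -/
def pd (i : Fin 2) (f : E2 → ℝ) (x : E2) : ℝ :=
  fderiv ℝ f x (EuclideanSpace.single i 1)

/-- `|∇u(x)|² = (∂₁u¹)² + (∂₂u²)² + (∂₁u²)² + (∂₂u¹)²`. -/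
def gradSq (u : E2 → E2) (x : E2) : ℝ :=
  (pd 0 (fun y => u y 0) x) ^ 2 + (pd 1 (fun y => u y 1) x) ^ 2
    + (pd 0 (fun y => u y 1) x) ^ 2 + (pd 1 (fun y => u y 0) x) ^ 2

/-- The arc-length (surface) measure on the unit circle `𝕊 ⊂ ℝ²`.
Averaging `⨍` against it is averaging with respect to the uniform
probability measure on `𝕊`. -/
def sphσ : Measure (Metric.sphere (0 : E2) 1) := (volume : Measure E2).toSphere

/-! ### Auxiliary lemmas -/

structure Nice (f : E2 → ℝ) : Prop where
  smooth : ContDiff ℝ (⊤ : ℕ∞) f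
  supp : HasCompactSupport f

namespace Nice

variable {f g : E2 → ℝ}

lemma cont (hf : Nice f) : Continuous f := hf.smooth.continuous

lemma diff (hf : Nice f) : Differentiable ℝ f := hf.smooth.differentiable (by simp)

protected lemma pd (hf : Nice f) (i : Fin 2) : Nice (pd i f) := by
  constructor
  · show ContDiff ℝ (⊤ : ℕ∞) fun x => fderiv ℝ f x (EuclideanSpace.single i 1)
    exact (hf.smooth.fderiv_right (m := (⊤ : ℕ∞)) (by simp)).clm_apply contDiff_const
  · show HasCompactSupport fun x => fderiv ℝ f x (EuclideanSpace.single i 1)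
    exact hf.supp.fderiv_apply (𝕜 := ℝ) _

lemma integrable (hf : Nice f) : Integrable f :=
  hf.cont.integrable_of_hasCompactSupport hf.supp

protected lemma mul (hf : Nice f) (hg : Nice g) : Nice (fun x => f x * g x) :=
  ⟨hf.smooth.mul hg.smooth, hf.supp.mul_right⟩

protected lemma add (hf : Nice f) (hg : Nice g) : Nice (fun x => f x + g x) :=
  ⟨hf.smooth.add hg.smooth, hf.supp.add hg.supp⟩

protected lemma sub (hf : Nice f) (hg : Nice g) : Nice (fun x => f x - g x) := by
  have e : (fun x => f x - g x) = fun x => f x + (-(g x)) := by ext x; ring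
  rw [e]
  exact ⟨hf.smooth.add hg.smooth.neg,
    hf.supp.add (hg.supp.comp_left (g := Neg.neg) neg_zero)⟩

protected lemma sq (hf : Nice f) : Nice (fun x => f x ^ 2) := by
  have : (fun x => f x ^ 2) = fun x => f x * f x := by ext x; ring
  rw [this]; exact hf.mul hf

protected lemma shift (hf : Nice f) (c : E2) : Nice (fun x => f (x + c)) :=
  ⟨hf.smooth.comp (contDiff_id.add contDiff_const),
   hf.supp.comp_homeomorph (Homeomorph.addRight c)⟩

end Nice

lemma pd_shift {f : E2 → ℝ} (hf : Nice f) (c : E2) (i : Fin 2) (x : E2) :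
    pd i (fun y => f (y + c)) x = pd i f (x + c) := by
  have h2 : HasFDerivAt (fun y : E2 => y + c) (ContinuousLinearMap.id ℝ E2) x :=
    (hasFDerivAt_id x).add_const c
  have h1 : HasFDerivAt (fun y : E2 => f (y + c)) (fderiv ℝ f (x + c)) x := by
    exact ((hf.diff (x + c)).hasFDerivAt.comp x h2)
  simp only [pd, h1.fderiv]

lemma coord_le_norm (h : E2) (i : Fin 2) : |h i| ≤ ‖h‖ := by
  rw [EuclideanSpace.norm_eq, ← Real.sqrt_sq_eq_abs]
  apply Real.sqrt_le_sqrt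
  have : |h i| ^ 2 ≤ ∑ j : Fin 2, ‖h j‖ ^ 2 := by
    have := Finset.single_le_sum (f := fun j => ‖h j‖ ^ 2)
      (fun j _ => by positivity) (Finset.mem_univ i)
    simpa [sq_abs, Real.norm_eq_abs] using this
  simpa [sq_abs] using this

lemma fderiv_apply_eq {f : E2 → ℝ} (hf : Nice f) (x h : E2) :
    fderiv ℝ f x h = h 0 * pd 0 f x + h 1 * pd 1 f x := by
  have hh : h = h 0 • EuclideanSpace.single (0 : Fin 2) (1:ℝ)
      + h 1 • EuclideanSpace.single (1 : Fin 2) (1:ℝ) := by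
    ext j
    fin_cases j <;> simp [EuclideanSpace.single_apply]
  conv_lhs => rw [hh]
  rw [map_add, (fderiv ℝ f x).map_smul, (fderiv ℝ f x).map_smul]
  simp [pd, smul_eq_mul]

lemma ibp {f g : E2 → ℝ} (hf : Nice f) (hg : Nice g) (i : Fin 2) :
    ∫ x : E2, f x * pd i g x = - ∫ x : E2, pd i f x * g x := by
  have := integral_mul_fderiv_eq_neg_fderiv_mul_of_integrable
    (μ := (volume : Measure E2)) (v := EuclideanSpace.single i 1) (f := f) (g := g)
    (((hf.pd i).mul hg).integrable) ((hf.mul (hg.pd i)).integrable)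
    ((hf.mul hg).integrable) (fun x _ => hf.diff x) (fun x _ => hg.diff x)
  simpa [pd] using this

lemma int_mul_pd_self {f : E2 → ℝ} (hf : Nice f) (i : Fin 2) :
    ∫ x : E2, f x * pd i f x = 0 := by
  have h1 := ibp hf hf i
  have h2 : ∫ x : E2, pd i f x * f x = ∫ x : E2, f x * pd i f x := by
    congr 1; ext x; ring
  linarith [h1, h2.symm ▸ h1]

/-- The key translation estimate. -/
lemma keyA {f g : E2 → ℝ} (hf : Nice f) (hg : Nice g) (h : E2) :
    |(∫ x : E2, g x * f (x + h)) - ∫ x : E2, g x * f x| ≤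
      ‖h‖ * ((∫ x : E2, g x ^ 2) + (∫ x : E2, pd 0 f x ^ 2)
        + (∫ x : E2, pd 1 f x ^ 2)) := by
  set S : ℝ := (∫ x : E2, g x ^ 2) + (∫ x : E2, pd 0 f x ^ 2)
      + (∫ x : E2, pd 1 f x ^ 2) with hS
  obtain ⟨B, hB⟩ := (hf.supp.fderiv (𝕜 := ℝ)).exists_bound_of_continuous
    ((hf.smooth.fderiv_right (m := (⊤ : ℕ∞)) (by simp)).continuous)
  have hB0 : 0 ≤ B := le_trans (norm_nonneg _) (hB 0)
  set F : ℝ → E2 → ℝ := fun t x => g x * f (x + t • h) with hF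
  set F' : ℝ → E2 → ℝ := fun t x => g x * fderiv ℝ f (x + t • h) h with hF'
  -- differentiability of each φ(t) = ∫ F t x
  have hcurve : ∀ (x : E2) (t : ℝ), HasDerivAt (fun s : ℝ => x + s • h) h t := by
    intro x t
    simpa using ((hasDerivAt_id t).smul_const h).const_add x
  have hFdiff : ∀ (x : E2) (t : ℝ),
      HasDerivAt (fun s => F s x) (F' t x) t := by
    intro x t
    exact ((hf.diff _).hasFDerivAt.comp_hasDerivAt t (hcurve x t)).const_mul (g x)
  have hcontF' : ∀ t : ℝ, Continuous (F' t) := by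
    intro t
    apply hg.cont.mul
    exact ((hf.smooth.fderiv_right (m := (⊤ : ℕ∞)) (by simp)).continuous.comp
      (continuous_id.add continuous_const)).clm_apply continuous_const
  have hderiv : ∀ t₀ : ℝ, HasDerivAt (fun t => ∫ x : E2, F t x)
      (∫ x : E2, F' t₀ x) t₀ := by
    intro t₀
    refine (hasDerivAt_integral_of_dominated_loc_of_deriv_le
      (s := Metric.ball t₀ 1) (Metric.ball_mem_nhds t₀ one_pos) ?_ ?_ ?_
      (bound := fun x => |g x| * (B * ‖h‖)) ?_ ?_ ?_).2
    · filter_upwards with t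
      exact (hg.cont.mul (hf.cont.comp (continuous_id.add continuous_const))).aestronglyMeasurable
    · exact (hg.mul (hf.shift (t₀ • h))).integrable
    · exact (hcontF' t₀).aestronglyMeasurable
    · filter_upwards with x t _
      have h1 : |fderiv ℝ f (x + t • h) h| ≤ B * ‖h‖ := by
        calc |fderiv ℝ f (x + t • h) h| ≤ ‖fderiv ℝ f (x + t • h)‖ * ‖h‖ :=
          (fderiv ℝ f (x + t • h)).le_opNorm h
        _ ≤ B * ‖h‖ := by gcongr; exact hB _
      calc ‖F' t x‖ = |g x| * |fderiv ℝ f (x + t • h) h| := abs_mul _ _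
      _ ≤ |g x| * (B * ‖h‖) := by gcongr
    · exact (hg.integrable.norm.mul_const _)
    · filter_upwards with x t _
      exact hFdiff x t
  -- bound on the derivative
  have hSnn : ∀ t : ℝ, |∫ x : E2, F' t x| ≤ ‖h‖ * S := by
    intro t
    have hint1 : Integrable (fun x : E2 => |F' t x|) :=
      ((hcontF' t).integrable_of_hasCompactSupport hg.supp.mul_right).abs
    have hint2 : Integrable (fun x : E2 =>
        ‖h‖ * (g x ^ 2 + (1/2) * pd 0 f (x + t • h) ^ 2
          + (1/2) * pd 1 f (x + t • h) ^ 2)) := by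
      apply Integrable.const_mul
      apply Integrable.add
      apply Integrable.add
      · exact hg.sq.integrable
      · exact (((hf.pd 0).shift (t • h)).sq.integrable).const_mul _
      · exact (((hf.pd 1).shift (t • h)).sq.integrable).const_mul _
    have hpt : ∀ x : E2, |F' t x| ≤
        ‖h‖ * (g x ^ 2 + (1/2) * pd 0 f (x + t • h) ^ 2
          + (1/2) * pd 1 f (x + t • h) ^ 2) := by
      intro x
      have e1 : fderiv ℝ f (x + t • h) h
          = h 0 * pd 0 f (x + t • h) + h 1 * pd 1 f (x + t • h) :=
        fderiv_apply_eq hf _ h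
      have h0 : |h 0| ≤ ‖h‖ := coord_le_norm h 0
      have h1 : |h 1| ≤ ‖h‖ := coord_le_norm h 1
      have habs : |F' t x| ≤ |g x| * (|h 0| * |pd 0 f (x + t • h)|
          + |h 1| * |pd 1 f (x + t • h)|) := by
        rw [hF']
        simp only []
        rw [abs_mul, e1]
        gcongr
        calc |h 0 * pd 0 f (x + t • h) + h 1 * pd 1 f (x + t • h)|
            ≤ |h 0 * pd 0 f (x + t • h)| + |h 1 * pd 1 f (x + t • h)| := abs_add_le _ _
        _ = |h 0| * |pd 0 f (x + t • h)| + |h 1| * |pd 1 f (x + t • h)| := by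
            rw [abs_mul, abs_mul]
      set a := |g x|
      set b := |pd 0 f (x + t • h)|
      set c := |pd 1 f (x + t • h)|
      have ha : 0 ≤ a := abs_nonneg _
      have hb : 0 ≤ b := abs_nonneg _
      have hc : 0 ≤ c := abs_nonneg _
      have hno : (0:ℝ) ≤ ‖h‖ := norm_nonneg _
      have step : a * (|h 0| * b + |h 1| * c) ≤ ‖h‖ * (a * b + a * c) := by
        have : a * (|h 0| * b + |h 1| * c) ≤ a * (‖h‖ * b + ‖h‖ * c) := by
          gcongr
        calc a * (|h 0| * b + |h 1| * c) ≤ a * (‖h‖ * b + ‖h‖ * c) := this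
        _ = ‖h‖ * (a * b + a * c) := by ring
      have amgm : a * b + a * c ≤ a ^ 2 + (1/2) * b ^ 2 + (1/2) * c ^ 2 := by
        nlinarith [sq_nonneg (a - b), sq_nonneg (a - c)]
      have : |F' t x| ≤ ‖h‖ * (a ^ 2 + (1/2) * b ^ 2 + (1/2) * c ^ 2) := by
        calc |F' t x| ≤ a * (|h 0| * b + |h 1| * c) := habs
        _ ≤ ‖h‖ * (a * b + a * c) := step
        _ ≤ ‖h‖ * (a ^ 2 + (1/2) * b ^ 2 + (1/2) * c ^ 2) := by gcongr
      simpa [a, b, c, sq_abs] using this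
    calc |∫ x : E2, F' t x| ≤ ∫ x : E2, |F' t x| := by
          simpa [Real.norm_eq_abs] using
            norm_integral_le_integral_norm (μ := (volume : Measure E2)) (F' t)
    _ ≤ ∫ x : E2, ‖h‖ * (g x ^ 2 + (1/2) * pd 0 f (x + t • h) ^ 2
          + (1/2) * pd 1 f (x + t • h) ^ 2) := integral_mono hint1 hint2 hpt
    _ = ‖h‖ * ((∫ x : E2, g x ^ 2) + (1/2) * (∫ x : E2, pd 0 f (x + t • h) ^ 2)
          + (1/2) * (∫ x : E2, pd 1 f (x + t • h) ^ 2)) := by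
          rw [integral_const_mul]
          congr 1
          have iC : Integrable (fun x : E2 => g x ^ 2) := hg.sq.integrable
          have iD : Integrable (fun x : E2 => 1/2 * pd 0 f (x + t • h) ^ 2) :=
            ((((hf.pd 0).shift (t • h)).sq.integrable).const_mul _)
          have iB : Integrable (fun x : E2 => 1/2 * pd 1 f (x + t • h) ^ 2) :=
            ((((hf.pd 1).shift (t • h)).sq.integrable).const_mul _)
          have iA : Integrable (fun x : E2 => g x ^ 2 + 1/2 * pd 0 f (x + t • h) ^ 2) :=
            iC.add iD
          rw [integral_add iA iB, integral_add iC iD, integral_const_mul, integral_const_mul]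
    _ ≤ ‖h‖ * S := by
          rw [hS]
          have e0 : (∫ x : E2, pd 0 f (x + t • h) ^ 2) = ∫ x : E2, pd 0 f x ^ 2 :=
            integral_add_right_eq_self (fun x => pd 0 f x ^ 2) (t • h)
          have e1 : (∫ x : E2, pd 1 f (x + t • h) ^ 2) = ∫ x : E2, pd 1 f x ^ 2 :=
            integral_add_right_eq_self (fun x => pd 1 f x ^ 2) (t • h)
          rw [e0, e1]
          have i0 : 0 ≤ ∫ x : E2, pd 0 f x ^ 2 := integral_nonneg fun x => sq_nonneg _
          have i1 : 0 ≤ ∫ x : E2, pd 1 f x ^ 2 := integral_nonneg fun x => sq_nonneg _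
          nlinarith [norm_nonneg h]
  -- mean value
  have hmv := Convex.norm_image_sub_le_of_norm_hasDerivWithin_le
    (f := fun t => ∫ x : E2, F t x) (f' := fun t => ∫ x : E2, F' t x)
    (C := ‖h‖ * S) (s := Set.univ)
    (fun t _ => (hderiv t).hasDerivWithinAt)
    (fun t _ => by simpa using hSnn t)
    (convex_univ) (Set.mem_univ 0) (Set.mem_univ 1)
  have e1 : (∫ x : E2, F 1 x) = ∫ x : E2, g x * f (x + h) := by
    congr 1; ext x; simp [hF]
  have e0 : (∫ x : E2, F 0 x) = ∫ x : E2, g x * f x := by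
    congr 1; ext x; simp [hF]
  rw [Real.norm_eq_abs] at hmv
  calc |(∫ x : E2, g x * f (x + h)) - ∫ x : E2, g x * f x|
      = |(∫ x : E2, F 1 x) - ∫ x : E2, F 0 x| := by rw [e1, e0]
  _ ≤ ‖h‖ * S * ‖(1:ℝ) - 0‖ := hmv
  _ = ‖h‖ * S := by simp

lemma abs_average_le {α : Type*} [MeasurableSpace α] (μ : Measure α) (f : α → ℝ)
    {C : ℝ} (hC : 0 ≤ C) (hf : ∀ a, |f a| ≤ C) : |⨍ a, f a ∂μ| ≤ C := by
  rw [average]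
  set ν := (μ Set.univ)⁻¹ • μ with hν
  have hν1 : ν Set.univ ≤ 1 := by
    rw [hν, Measure.smul_apply, smul_eq_mul]
    exact ENNReal.inv_mul_le_one _
  haveI : IsFiniteMeasure ν := ⟨lt_of_le_of_lt hν1 ENNReal.one_lt_top⟩
  have := MeasureTheory.norm_integral_le_of_norm_le_const (μ := ν) (f := f) (C := C)
    (Filter.Eventually.of_forall fun a => by simpa [Real.norm_eq_abs] using hf a)
  rw [Real.norm_eq_abs] at this
  calc |∫ a, f a ∂ν| ≤ C * (ν Set.univ).toReal := this
  _ ≤ C * 1 := by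
      gcongr
      exact ENNReal.toReal_le_of_le_ofReal one_pos.le (by simpa using hν1)
  _ = C := mul_one C

theorem Q_linear_bound :
    ∃ C : ℝ, 0 < C ∧
      ∀ (u : E2 → E2), ContDiff ℝ (⊤ : ℕ∞) u → HasCompactSupport u →
        (∀ x, pd 0 (fun y => u y 0) x + pd 1 (fun y => u y 1) x = 0) →
        ∀ (ω : E2 → ℝ),
          (∀ x, ω x = pd 0 (fun y => u y 1) x - pd 1 (fun y => u y 0) x) →
        ∀ (Q : ℝ → ℝ),
          (∀ l : ℝ, Q l =
            ⨍ n : Metric.sphere (0 : E2) 1,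
              (∫ x : E2, (u x 1 * ω (x + l • (n : E2))
                + u (x + l • (n : E2)) 1 * ω x)) ∂sphσ) →
        ∀ l : ℝ, 0 ≤ l →
          |Q l| ≤ C * l * ∫ x : E2, gradSq u x := by
  refine ⟨12, by norm_num, ?_⟩
  intro u hu hsupp hdiv ω hω Q hQ l hl
  set f0 : E2 → ℝ := fun y => u y 0 with hf0
  set f1 : E2 → ℝ := fun y => u y 1 with hf1
  have hN : ∀ i : Fin 2, Nice (fun y => u y i) := by
    intro i
    constructor
    · exact (EuclideanSpace.proj i).contDiff.comp hu
    · exact hsupp.comp_left (g := fun v : E2 => v i) rfl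
  have hN0 : Nice f0 := hN 0
  have hN1 : Nice f1 := hN 1
  have hNω : Nice ω := by
    have : ω = fun x => pd 0 f1 x - pd 1 f0 x := funext hω
    rw [this]
    exact (hN1.pd 0).sub (hN0.pd 1)
  set D : ℝ := ∫ x : E2, gradSq u x with hD
  have hgradeq : (fun x : E2 => gradSq u x)
      = fun x => pd 0 f0 x ^ 2 + pd 1 f1 x ^ 2 + pd 0 f1 x ^ 2 + pd 1 f0 x ^ 2 := rfl
  have hgradN : Nice (fun x : E2 => gradSq u x) := by
    rw [hgradeq]
    exact (((hN0.pd 0).sq.add (hN1.pd 1).sq).add (hN1.pd 0).sq).add (hN0.pd 1).sq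
  have hDnn : 0 ≤ D := integral_nonneg fun x => by
    simp only [gradSq]; positivity
  have hgx : ∀ x : E2, gradSq u x
      = pd 0 f0 x ^ 2 + pd 1 f1 x ^ 2 + pd 0 f1 x ^ 2 + pd 1 f0 x ^ 2 := fun x => rfl
  have hmono : ∀ gg : E2 → ℝ, Nice gg → (∀ x : E2, gg x ^ 2 ≤ gradSq u x) →
      (∫ x : E2, gg x ^ 2) ≤ D := by
    intro gg hgg hle
    rw [hD]
    exact integral_mono hgg.sq.integrable hgradN.integrable hle
  have t01 : (∫ x : E2, pd 0 f1 x ^ 2) ≤ D := hmono _ (hN1.pd 0) (fun x => by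
    rw [hgx x]
    nlinarith [sq_nonneg (pd 0 f0 x), sq_nonneg (pd 1 f1 x), sq_nonneg (pd 1 f0 x)])
  have t11 : (∫ x : E2, pd 1 f1 x ^ 2) ≤ D := hmono _ (hN1.pd 1) (fun x => by
    rw [hgx x]
    nlinarith [sq_nonneg (pd 0 f0 x), sq_nonneg (pd 0 f1 x), sq_nonneg (pd 1 f0 x)])
  have t00 : (∫ x : E2, pd 0 f0 x ^ 2) ≤ D := hmono _ (hN0.pd 0) (fun x => by
    rw [hgx x]
    nlinarith [sq_nonneg (pd 1 f1 x), sq_nonneg (pd 0 f1 x), sq_nonneg (pd 1 f0 x)])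
  have t10 : (∫ x : E2, pd 1 f0 x ^ 2) ≤ D := hmono _ (hN0.pd 1) (fun x => by
    rw [hgx x]
    nlinarith [sq_nonneg (pd 0 f0 x), sq_nonneg (pd 1 f1 x), sq_nonneg (pd 0 f1 x)])
  set F : E2 → ℝ := fun h => ∫ x : E2, f1 x * ω (x + h) with hFdef
  -- rewrite F via integration by parts
  have hFG : ∀ h : E2, F h
      = (- ∫ x : E2, pd 0 f1 x * f1 (x + h)) + ∫ x : E2, pd 1 f1 x * f0 (x + h) := by
    intro h
    have iA : Integrable (fun x : E2 => f1 x * pd 0 (fun y => f1 (y + h)) x) := by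
      have e : (fun x : E2 => f1 x * pd 0 (fun y => f1 (y + h)) x)
          = fun x => f1 x * pd 0 f1 (x + h) := by
        ext x; rw [pd_shift hN1 h 0 x]
      rw [e]
      exact (hN1.mul ((hN1.pd 0).shift h)).integrable
    have iB : Integrable (fun x : E2 => f1 x * pd 1 (fun y => f0 (y + h)) x) := by
      have e : (fun x : E2 => f1 x * pd 1 (fun y => f0 (y + h)) x)
          = fun x => f1 x * pd 1 f0 (x + h) := by
        ext x; rw [pd_shift hN0 h 1 x]
      rw [e]
      exact (hN1.mul ((hN0.pd 1).shift h)).integrable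
    have e1 : F h = (∫ x : E2, f1 x * pd 0 (fun y => f1 (y + h)) x)
        - ∫ x : E2, f1 x * pd 1 (fun y => f0 (y + h)) x := by
      rw [← integral_sub iA iB]
      simp only [hFdef]
      congr 1
      ext x
      rw [hω, pd_shift hN1 h 0 x, pd_shift hN0 h 1 x]
      ring
    rw [e1, ibp hN1 (hN1.shift h) 0, ibp hN1 (hN0.shift h) 1]
    ring
  have hF0 : F 0 = 0 := by
    have h1 : (∫ x : E2, pd 0 f1 x * f1 (x + 0)) = 0 := by
      simp only [add_zero]
      have e : (∫ x : E2, pd 0 f1 x * f1 x) = ∫ x : E2, f1 x * pd 0 f1 x := by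
        congr 1; ext x; ring
      rw [e, int_mul_pd_self hN1 0]
    have h2 : (∫ x : E2, pd 1 f1 x * f0 (x + 0)) = 0 := by
      simp only [add_zero]
      have e : (∫ x : E2, pd 1 f1 x * f0 x) = - ∫ x : E2, f0 x * pd 0 f0 x := by
        rw [← integral_neg]
        congr 1; ext x
        have hd : pd 1 f1 x = - pd 0 f0 x := by linarith [hdiv x]
        rw [hd]; ring
      rw [e, int_mul_pd_self hN0 0, neg_zero]
    rw [hFG 0, h1, h2]; ring
  have hFbound : ∀ h : E2, |F h| ≤ 6 * ‖h‖ * D := by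
    intro h
    have kA := keyA hN1 (hN1.pd 0) h
    have kB := keyA hN0 (hN1.pd 1) h
    have hno : (0:ℝ) ≤ ‖h‖ := norm_nonneg _
    have hA : |(∫ x : E2, pd 0 f1 x * f1 (x + h)) - ∫ x : E2, pd 0 f1 x * f1 x|
        ≤ ‖h‖ * (3 * D) := by
      refine le_trans kA ?_
      have hmul : (∫ x : E2, pd 0 f1 x ^ 2) + (∫ x : E2, pd 0 f1 x ^ 2)
          + (∫ x : E2, pd 1 f1 x ^ 2) ≤ 3 * D := by linarith
      exact mul_le_mul_of_nonneg_left hmul hno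
    have hB : |(∫ x : E2, pd 1 f1 x * f0 (x + h)) - ∫ x : E2, pd 1 f1 x * f0 x|
        ≤ ‖h‖ * (3 * D) := by
      refine le_trans kB ?_
      have hmul : (∫ x : E2, pd 1 f1 x ^ 2) + (∫ x : E2, pd 0 f0 x ^ 2)
          + (∫ x : E2, pd 1 f0 x ^ 2) ≤ 3 * D := by linarith
      exact mul_le_mul_of_nonneg_left hmul hno
    have eFh := hFG h
    have eF0 := hFG 0
    have hzero : (- ∫ x : E2, pd 0 f1 x * f1 x) + (∫ x : E2, pd 1 f1 x * f0 x) = 0 := by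
      rw [← hF0, eF0]; simp only [add_zero]
    have hrepr : F h = -((∫ x : E2, pd 0 f1 x * f1 (x + h)) - ∫ x : E2, pd 0 f1 x * f1 x)
        + ((∫ x : E2, pd 1 f1 x * f0 (x + h)) - ∫ x : E2, pd 1 f1 x * f0 x) := by
      rw [eFh]; linarith [hzero]
    calc |F h| ≤ |(∫ x : E2, pd 0 f1 x * f1 (x + h)) - ∫ x : E2, pd 0 f1 x * f1 x|
          + |(∫ x : E2, pd 1 f1 x * f0 (x + h)) - ∫ x : E2, pd 1 f1 x * f0 x| := by
          rw [hrepr]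
          refine le_trans (abs_add_le _ _) ?_
          rw [abs_neg]
    _ ≤ ‖h‖ * (3 * D) + ‖h‖ * (3 * D) := add_le_add hA hB
    _ = 6 * ‖h‖ * D := by ring
  have hinner : ∀ h : E2,
      |∫ x : E2, (f1 x * ω (x + h) + f1 (x + h) * ω x)| ≤ 12 * ‖h‖ * D := by
    intro h
    have e2 : (∫ x : E2, f1 (x + h) * ω x) = F (-h) := by
      rw [hFdef]
      have e3 := integral_add_right_eq_self (μ := (volume : Measure E2))
        (fun y : E2 => f1 y * ω (y + -h)) h
      simp only [add_neg_cancel_right] at e3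
      exact e3
    have hsplit : (∫ x : E2, (f1 x * ω (x + h) + f1 (x + h) * ω x)) = F h + F (-h) := by
      rw [integral_add (hN1.mul (hNω.shift h)).integrable
        ((hN1.shift h).mul hNω).integrable, e2]
    rw [hsplit]
    have b1 := hFbound h
    have b2 := hFbound (-h)
    rw [norm_neg] at b2
    calc |F h + F (-h)| ≤ |F h| + |F (-h)| := abs_add_le _ _
    _ ≤ 12 * ‖h‖ * D := by linarith
  rw [hQ l]
  have hC : (0:ℝ) ≤ 12 * l * D := by
    apply mul_nonneg (mul_nonneg (by norm_num) hl) hDnn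
  refine abs_average_le _ _ hC ?_
  intro n
  have hn : ‖(n : E2)‖ = 1 := by
    have h2 := n.2
    rw [mem_sphere_iff_norm, sub_zero] at h2
    exact h2
  have hkey := hinner (l • (n : E2))
  rw [norm_smul, hn, Real.norm_eq_abs, abs_of_nonneg hl, mul_one] at hkey
  simpa [hf1] using hkey

end
end

section
/- Let ω : ℝ² → ℝ be a C^∞, compactly supported function and define C̄(l) := ⨍_{𝕊} ∫_{ℝ²} ω(x) ω(x+ln) dx dn for l ≥ 0. Then C̄ is differentiable and |C̄'(l)| ≤ ‖∇ω‖_{L²(ℝ²)} ‖ω‖_{L²(ℝ²)} for every l ≥ 0. -/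
/-!
STATEMENT 11: For a C^∞ compactly supported `ω : ℝ² → ℝ`, the function
`C̄(l) := ⨍_𝕊 ∫ ω(x) ω(x+ln) dx dn` is differentiable with
`|C̄'(l)| ≤ ‖∇ω‖_{L²} ‖ω‖_{L²}` for all `l ≥ 0`.
-/

open MeasureTheory

noncomputable section

/-- For a continuous linear functional on `ℝ²`, the square of the operator norm
is the sum of the squares of its values on the standard orthonormal basis. -/
lemma clm_norm_sq (f : E2 →L[ℝ] ℝ) :
    ‖f‖ ^ 2 = (f (EuclideanSpace.single 0 1)) ^ 2 + (f (EuclideanSpace.single 1 1)) ^ 2 := by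
  set v : E2 := (InnerProductSpace.toDual ℝ E2).symm f with hv
  have hnorm : ‖f‖ = ‖v‖ := ((InnerProductSpace.toDual ℝ E2).symm.norm_map f).symm
  have happ : ∀ i : Fin 2, f (EuclideanSpace.single i 1) = v i := by
    intro i
    have h2 : (inner ℝ v (EuclideanSpace.single i (1:ℝ)) : ℝ) = v i := by
      rw [EuclideanSpace.inner_single_right]; simp
    rw [← h2, hv, InnerProductSpace.toDual_symm_apply]
  have hnv : ‖v‖ ^ 2 = (v 0) ^ 2 + (v 1) ^ 2 := by
    rw [EuclideanSpace.norm_eq, Real.sq_sqrt (by positivity)]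
    simp [Fin.sum_univ_two, Real.norm_eq_abs, sq_abs]
  rw [hnorm, hnv, happ 0, happ 1]

theorem CBar_deriv_bound
    (ω : E2 → ℝ) (hω : ContDiff ℝ (⊤ : ℕ∞) ω) (hsupp : HasCompactSupport ω)
    (CBar : ℝ → ℝ)
    (hC : ∀ l : ℝ, CBar l =
      ⨍ n : Metric.sphere (0 : E2) 1,
        (∫ x : E2, ω x * ω (x + l • (n : E2))) ∂sphσ) :
    ∀ l : ℝ, 0 ≤ l →
      DifferentiableAt ℝ CBar l ∧
      |deriv CBar l| ≤
        Real.sqrt (∫ x : E2, ((pd 0 ω x) ^ 2 + (pd 1 ω x) ^ 2)) *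
          Real.sqrt (∫ x : E2, (ω x) ^ 2) := by
  have Cω : Continuous ω := hω.continuous
  have Dc : Continuous (fderiv ℝ ω) := hω.continuous_fderiv (by simp)
  have Dsupp : HasCompactSupport (fderiv ℝ ω) := hsupp.fderiv (𝕜 := ℝ)
  obtain ⟨M, hM⟩ := Dsupp.exists_bound_of_continuous Dc
  have hM0 : 0 ≤ M := le_trans (norm_nonneg _) (hM 0)
  obtain ⟨S, hS⟩ := hsupp.exists_bound_of_continuous Cω
  have hω_int : Integrable ω := Cω.integrable_of_hasCompactSupport hsupp
  set K : ℝ := Real.sqrt (∫ x : E2, ((pd 0 ω x) ^ 2 + (pd 1 ω x) ^ 2)) *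
      Real.sqrt (∫ x : E2, (ω x) ^ 2) with hK
  have hKgrad : (∫ x : E2, ((pd 0 ω x) ^ 2 + (pd 1 ω x) ^ 2)) =
      ∫ x : E2, ‖fderiv ℝ ω x‖ ^ 2 :=
    integral_congr_ae (Filter.Eventually.of_forall fun x => (clm_norm_sq (fderiv ℝ ω x)).symm)
  have hK0 : 0 ≤ K := mul_nonneg (Real.sqrt_nonneg _) (Real.sqrt_nonneg _)
  -- continuity of translated maps
  have htrans : ∀ (c : E2), Continuous fun x : E2 => x + c := fun c =>
    continuous_id.add continuous_const
  -- Pointwise derivative of the inner integrand in `l`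
  have hptdiff : ∀ (n : E2) (x : E2) (l : ℝ),
      HasDerivAt (fun l' : ℝ => ω x * ω (x + l' • n))
        (ω x * fderiv ℝ ω (x + l • n) n) l := by
    intro n x l
    have h1 : HasDerivAt (fun l' : ℝ => x + l' • n) n l := by
      simpa using ((hasDerivAt_id l).smul_const n).const_add x
    have h2 : HasDerivAt (fun l' : ℝ => ω (x + l' • n)) (fderiv ℝ ω (x + l • n) n) l :=
      ((hω.differentiable (by simp) _).hasFDerivAt).comp_hasDerivAt l h1
    exact h2.const_mul (ω x)
  -- The inner integral has a derivative in `l` for every unit vector `n`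
  have key : ∀ (n : E2), ‖n‖ ≤ 1 → ∀ l : ℝ,
      HasDerivAt (fun l' : ℝ => ∫ x : E2, ω x * ω (x + l' • n))
        (∫ x : E2, ω x * fderiv ℝ ω (x + l • n) n) l := by
    intro n hn l
    have hres := hasDerivAt_integral_of_dominated_loc_of_deriv_le
      (F := fun l' : ℝ => fun x : E2 => ω x * ω (x + l' • n))
      (F' := fun l' : ℝ => fun x : E2 => ω x * fderiv ℝ ω (x + l' • n) n)
      (bound := fun x : E2 => ‖ω x‖ * M) (μ := (volume : Measure E2))
      (x₀ := l) (Metric.ball_mem_nhds l one_pos)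
      (Filter.Eventually.of_forall fun l' =>
        (Cω.mul (Cω.comp (htrans (l' • n)))).aestronglyMeasurable)
      ((Cω.mul (Cω.comp (htrans (l • n)))).integrable_of_hasCompactSupport hsupp.mul_right)
      ((Cω.mul (((Dc.comp (htrans (l • n))).clm_apply
        continuous_const))).aestronglyMeasurable)
      (Filter.Eventually.of_forall fun x => fun l' _ => by
        have h1 : ‖fderiv ℝ ω (x + l' • n) n‖ ≤ M := by
          calc ‖fderiv ℝ ω (x + l' • n) n‖
              ≤ ‖fderiv ℝ ω (x + l' • n)‖ * ‖n‖ :=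
                (fderiv ℝ ω (x + l' • n)).le_opNorm n
            _ ≤ M * 1 := mul_le_mul (hM _) hn (norm_nonneg _) hM0
            _ = M := mul_one M
        calc ‖ω x * fderiv ℝ ω (x + l' • n) n‖
            = ‖ω x‖ * ‖fderiv ℝ ω (x + l' • n) n‖ := norm_mul _ _
          _ ≤ ‖ω x‖ * M := mul_le_mul_of_nonneg_left h1 (norm_nonneg _))
      (hω_int.norm.mul_const M)
      (Filter.Eventually.of_forall fun x => fun l' _ => hptdiff n x l')
    exact hres.2
  -- Cauchy–Schwarz bound for the derivative of the inner integral
  have keybd : ∀ (n : E2), ‖n‖ = 1 → ∀ l : ℝ,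
      ‖∫ x : E2, ω x * fderiv ℝ ω (x + l • n) n‖ ≤ K := by
    intro n hn l
    set g : E2 → ℝ := fun x => ‖fderiv ℝ ω (x + l • n)‖ with hg
    have hgc : Continuous g := (Dc.comp (htrans (l • n))).norm
    have hgsupp : HasCompactSupport g :=
      (Dsupp.comp_homeomorph (Homeomorph.addRight (l • n))).norm
    have step1 : ‖∫ x : E2, ω x * fderiv ℝ ω (x + l • n) n‖ ≤
        ∫ x : E2, ‖ω x‖ * g x := by
      refine norm_integral_le_of_norm_le
        ((Cω.norm.mul hgc).integrable_of_hasCompactSupport hsupp.norm.mul_right)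
        (Filter.Eventually.of_forall fun x => ?_)
      have h1 : ‖fderiv ℝ ω (x + l • n) n‖ ≤ g x := by
        calc ‖fderiv ℝ ω (x + l • n) n‖
            ≤ ‖fderiv ℝ ω (x + l • n)‖ * ‖n‖ := (fderiv ℝ ω (x + l • n)).le_opNorm n
          _ = g x := by rw [hn, mul_one]
      calc ‖ω x * fderiv ℝ ω (x + l • n) n‖
          = ‖ω x‖ * ‖fderiv ℝ ω (x + l • n) n‖ := norm_mul _ _
        _ ≤ ‖ω x‖ * g x := mul_le_mul_of_nonneg_left h1 (norm_nonneg _)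
    have hpq : Real.HolderConjugate 2 2 := by constructor <;> norm_num
    have step2 : ∫ x : E2, ‖ω x‖ * g x ≤
        (∫ x : E2, ‖ω x‖ ^ (2 : ℝ)) ^ ((1 : ℝ)/2) * (∫ x : E2, g x ^ (2 : ℝ)) ^ ((1 : ℝ)/2) := by
      refine integral_mul_le_Lp_mul_Lq_of_nonneg hpq
        (Filter.Eventually.of_forall fun x => norm_nonneg _)
        (Filter.Eventually.of_forall fun x => norm_nonneg _) ?_ ?_
      · exact Cω.norm.memLp_of_hasCompactSupport hsupp.norm
      · exact hgc.memLp_of_hasCompactSupport hgsupp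
    have h2n : ∀ y : ℝ, y ^ (2 : ℝ) = y ^ 2 := fun y => by
      rw [show (2 : ℝ) = ((2 : ℕ) : ℝ) by norm_num, Real.rpow_natCast]
    have hωsq : (∫ x : E2, ‖ω x‖ ^ (2 : ℝ)) = ∫ x : E2, (ω x) ^ 2 := by
      simp_rw [h2n, Real.norm_eq_abs, sq_abs]
    have hgsq : (∫ x : E2, g x ^ (2 : ℝ)) = ∫ x : E2, ‖fderiv ℝ ω x‖ ^ 2 := by
      simp_rw [h2n, hg]
      exact integral_add_right_eq_self (fun x : E2 => ‖fderiv ℝ ω x‖ ^ 2) (l • n)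
    have hrw : (∫ x : E2, ‖ω x‖ ^ (2 : ℝ)) ^ ((1 : ℝ)/2) * (∫ x : E2, g x ^ (2 : ℝ)) ^ ((1 : ℝ)/2)
        = K := by
      rw [hωsq, hgsq, hK, hKgrad, ← Real.sqrt_eq_rpow, ← Real.sqrt_eq_rpow, mul_comm]
    calc ‖∫ x : E2, ω x * fderiv ℝ ω (x + l • n) n‖
        ≤ ∫ x : E2, ‖ω x‖ * g x := step1
      _ ≤ _ := step2
      _ = K := hrw
  -- The sphere measure, normalized
  haveI hfin : IsFiniteMeasure sphσ := by unfold sphσ; infer_instance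
  set c : ENNReal := sphσ Set.univ with hc
  have hc0 : c ≠ 0 := by
    rw [hc, sphσ, Measure.toSphere_apply_univ]
    have h1 : (volume : Measure E2) (Metric.ball 0 1) ≠ 0 :=
      (Metric.measure_ball_pos _ 0 one_pos).ne'
    have h2 : (Module.finrank ℝ E2 : ENNReal) ≠ 0 := by
      simp [finrank_euclideanSpace_fin]
    exact mul_ne_zero h2 h1
  have hctop : c ≠ ⊤ := measure_ne_top _ _
  set ν : Measure (Metric.sphere (0 : E2) 1) := c⁻¹ • sphσ with hν
  haveI hprob : IsProbabilityMeasure ν :=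
    ⟨by rw [hν, Measure.smul_apply, smul_eq_mul, ← hc, ENNReal.inv_mul_cancel hc0 hctop]⟩
  have hCB : CBar = fun l : ℝ =>
      ∫ n : Metric.sphere (0 : E2) 1, (∫ x : E2, ω x * ω (x + l • (n : E2))) ∂ν :=
    funext fun l => by rw [hC l]; rfl
  -- continuity in `n` of the inner integrals
  have hsub : Continuous fun n : Metric.sphere (0 : E2) 1 => (n : E2) := continuous_subtype_val
  have contF : ∀ l : ℝ, Continuous fun n : Metric.sphere (0 : E2) 1 =>
      ∫ x : E2, ω x * ω (x + l • (n : E2)) := by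
    intro l
    refine continuous_of_dominated (bound := fun x : E2 => ‖ω x‖ * S) ?_ ?_ ?_ ?_
    · intro n; exact (Cω.mul (Cω.comp (htrans (l • (n : E2))))).aestronglyMeasurable
    · intro n
      refine Filter.Eventually.of_forall fun x => ?_
      calc ‖ω x * ω (x + l • (n : E2))‖ = ‖ω x‖ * ‖ω (x + l • (n : E2))‖ := norm_mul _ _
        _ ≤ ‖ω x‖ * S := mul_le_mul_of_nonneg_left (hS _) (norm_nonneg _)
    · exact hω_int.norm.mul_const S
    · refine Filter.Eventually.of_forall fun x => ?_
      exact continuous_const.mul (Cω.comp (continuous_const.add (hsub.const_smul l)))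
  have contF' : ∀ l : ℝ, Continuous fun n : Metric.sphere (0 : E2) 1 =>
      ∫ x : E2, ω x * fderiv ℝ ω (x + l • (n : E2)) (n : E2) := by
    intro l
    refine continuous_of_dominated (bound := fun x : E2 => ‖ω x‖ * M) ?_ ?_ ?_ ?_
    · intro n
      exact (Cω.mul ((Dc.comp (htrans (l • (n : E2)))).clm_apply
        continuous_const)).aestronglyMeasurable
    · intro n
      refine Filter.Eventually.of_forall fun x => ?_
      have h1 : ‖fderiv ℝ ω (x + l • (n : E2)) (n : E2)‖ ≤ M := by
        calc ‖fderiv ℝ ω (x + l • (n : E2)) (n : E2)‖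
            ≤ ‖fderiv ℝ ω (x + l • (n : E2))‖ * ‖(n : E2)‖ :=
              (fderiv ℝ ω _).le_opNorm _
          _ = ‖fderiv ℝ ω (x + l • (n : E2))‖ := by
              rw [norm_eq_of_mem_sphere n, mul_one]
          _ ≤ M := hM _
      calc ‖ω x * fderiv ℝ ω (x + l • (n : E2)) (n : E2)‖
          = ‖ω x‖ * ‖fderiv ℝ ω (x + l • (n : E2)) (n : E2)‖ := norm_mul _ _
        _ ≤ ‖ω x‖ * M := mul_le_mul_of_nonneg_left h1 (norm_nonneg _)
    · exact hω_int.norm.mul_const M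
    · refine Filter.Eventually.of_forall fun x => ?_
      exact continuous_const.mul
        ((Dc.comp (continuous_const.add (hsub.const_smul l))).clm_apply hsub)
  intro l₀ _
  -- differentiate under the sphere average
  have houter := hasDerivAt_integral_of_dominated_loc_of_deriv_le
    (F := fun l : ℝ => fun n : Metric.sphere (0 : E2) 1 =>
      ∫ x : E2, ω x * ω (x + l • (n : E2)))
    (F' := fun l : ℝ => fun n : Metric.sphere (0 : E2) 1 =>
      ∫ x : E2, ω x * fderiv ℝ ω (x + l • (n : E2)) (n : E2))
    (bound := fun _ => K) (μ := ν) (x₀ := l₀) (Metric.ball_mem_nhds l₀ one_pos)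
    (Filter.Eventually.of_forall fun l => (contF l).aestronglyMeasurable)
    (by
      refine Integrable.mono' (integrable_const ((∫ x : E2, ‖ω x‖) * S))
        (contF l₀).aestronglyMeasurable (Filter.Eventually.of_forall fun n => ?_)
      calc ‖∫ x : E2, ω x * ω (x + l₀ • (n : E2))‖
          ≤ ∫ x : E2, ‖ω x‖ * S := by
            refine norm_integral_le_of_norm_le (hω_int.norm.mul_const S)
              (Filter.Eventually.of_forall fun x => ?_)
            calc ‖ω x * ω (x + l₀ • (n : E2))‖
                = ‖ω x‖ * ‖ω (x + l₀ • (n : E2))‖ := norm_mul _ _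
              _ ≤ ‖ω x‖ * S := mul_le_mul_of_nonneg_left (hS _) (norm_nonneg _)
        _ = (∫ x : E2, ‖ω x‖) * S := integral_mul_const _ _)
    ((contF' l₀).aestronglyMeasurable)
    (Filter.Eventually.of_forall fun n => fun l _ =>
      keybd (n : E2) (norm_eq_of_mem_sphere n) l)
    (integrable_const K)
    (Filter.Eventually.of_forall fun n => fun l _ =>
      key (n : E2) (le_of_eq (norm_eq_of_mem_sphere n)) l)
  rw [hCB]
  have hD := houter.2
  refine ⟨hD.differentiableAt, ?_⟩
  rw [hD.deriv]
  calc |∫ n : Metric.sphere (0 : E2) 1,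
        (∫ x : E2, ω x * fderiv ℝ ω (x + l₀ • (n : E2)) (n : E2)) ∂ν|
      = ‖∫ n : Metric.sphere (0 : E2) 1,
        (∫ x : E2, ω x * fderiv ℝ ω (x + l₀ • (n : E2)) (n : E2)) ∂ν‖ :=
        (Real.norm_eq_abs _).symm
    _ ≤ K * (ν Set.univ).toReal :=
        norm_integral_le_of_norm_le_const (μ := ν)
          (Filter.Eventually.of_forall fun n =>
            keybd (n : E2) (norm_eq_of_mem_sphere n) l₀)
    _ = K := by rw [measure_univ]; simp

end
end
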